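/- Invariance Theorem for harmonic conjugates: Let A and B be distinct points and C a point on the line AB. Suppose (l,R) and (l',R') are two auxiliary selections, where l is a line through C with l ≠ AB and R is a point outside both AB and l, and likewise l' is a line through C with l' ≠ AB and R' is a point outside both AB and l'. Set P = BR·l, Q = AR·l, S = AP·BQ, D = AB·RS, and analogously P' = BR'·l', Q' = AR'·l', S' = A P'·B Q', D' = AB·R'S' (all indicated joins and intersections exist and are unique). Then D = D'; the harmonic conjugate construction is independent of the choice of auxiliary elements. -/

import Mathlib

open Configuration

variable (P L : Type*) [Membership P L]

/-- Three points are collinear if some line passes through all three. -/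
def Col (A B C : P) : Prop := ∃ l : L, A ∈ l ∧ B ∈ l ∧ C ∈ l

/-- Every line of `L` is incident with at least `n` distinct points. -/
def LinesHaveAtLeast (n : ℕ) : Prop :=
  ∀ l : L, ∃ s : Finset P, n ≤ s.card ∧ ∀ X ∈ s, X ∈ l

/-- `IsTriangle A B C ab bc ca` : the points `A B C` form a triangle with sides
`ab = AB`, `bc = BC`, `ca = CA`; noncollinearity is expressed by each vertex
lying outside the opposite side. -/
def IsTriangle (A B C : P) (ab bc ca : L) : Prop :=
  A ∈ ab ∧ B ∈ ab ∧ B ∈ bc ∧ C ∈ bc ∧ C ∈ ca ∧ A ∈ ca ∧ A ∉ bc ∧ B ∉ ca ∧ C ∉ ab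

/-- Two triangles are distinct if corresponding vertices are distinct and
corresponding sides are distinct. -/
def DistinctTriangles (A B C A' B' C' : P) (ab bc ca ab' bc' ca' : L) : Prop :=
  A ≠ A' ∧ B ≠ B' ∧ C ≠ C' ∧ ab ≠ ab' ∧ bc ≠ bc' ∧ ca ≠ ca'

/-- Two triangles are perspective from the center `O` : the lines joining
corresponding vertices are concurrent at `O`, and `O` lies outside each of the
six sides. -/
def PerspectiveFromCenter (A B C A' B' C' : P) (ab bc ca ab' bc' ca' : L) (O : P) : Prop :=
  (∃ la : L, A ∈ la ∧ A' ∈ la ∧ O ∈ la) ∧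
  (∃ lb : L, B ∈ lb ∧ B' ∈ lb ∧ O ∈ lb) ∧
  (∃ lc : L, C ∈ lc ∧ C' ∈ lc ∧ O ∈ lc) ∧
  O ∉ ab ∧ O ∉ bc ∧ O ∉ ca ∧ O ∉ ab' ∧ O ∉ bc' ∧ O ∉ ca'

/-- Two triangles are perspective from the axis `l` : the intersection points of
corresponding sides lie on `l`, and `l` avoids each of the six vertices. -/
def PerspectiveFromAxis (A B C A' B' C' : P) (ab bc ca ab' bc' ca' : L) (l : L) : Prop :=
  (∃ X : P, X ∈ ab ∧ X ∈ ab' ∧ X ∈ l) ∧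
  (∃ Y : P, Y ∈ bc ∧ Y ∈ bc' ∧ Y ∈ l) ∧
  (∃ Z : P, Z ∈ ca ∧ Z ∈ ca' ∧ Z ∈ l) ∧
  A ∉ l ∧ B ∉ l ∧ C ∉ l ∧ A' ∉ l ∧ B' ∉ l ∧ C' ∉ l

/-- Desargues's property: two distinct triangles that are perspective from a
center are perspective from an axis. -/
def DesarguesProperty : Prop :=
  ∀ (A B C A' B' C' : P) (ab bc ca ab' bc' ca' : L) (O : P),
    IsTriangle P L A B C ab bc ca → IsTriangle P L A' B' C' ab' bc' ca' →
    DistinctTriangles P L A B C A' B' C' ab bc ca ab' bc' ca' →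
    PerspectiveFromCenter P L A B C A' B' C' ab bc ca ab' bc' ca' O →
    ∃ l : L, PerspectiveFromAxis P L A B C A' B' C' ab bc ca ab' bc' ca' l

/-!
Call two constructions generic if their lines `l`, `AR`, `BR`, `AP`, `BQ` are pairwise
different. For a generic pair, Desargues applied to `PP'B, QQ'A` (center `C`) puts
`O = PP'·QQ'` on `RR'`; applied to `PP'C, SS'B` (center `A`) it puts `O` on `SS'`; so the
triangles `RSQ, R'S'Q'` are perspective from `O`, and their axis `AB` contains `RS·R'S'`,
whence `D = D'`. Two arbitrary constructions are compared through a third one that is generic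
with respect to both; it exists because every line has at least seven points. If `C` is `A`
or `B`, the construction degenerates and returns `C`.
-/

open Finset

section Incidence

variable {P L}

theorem LinesHaveAtLeast.mono {k n : ℕ} (h : LinesHaveAtLeast P L n) (hkn : k ≤ n) :
    LinesHaveAtLeast P L k :=
  fun l => (h l).imp fun _ hs => ⟨hkn.trans hs.1, hs.2⟩

section Nondegenerate

variable [Nondegenerate P L] {p q x y z : P} {l m m' n : L}

theorem point_eq_of_mem_of_mem (hlm : l ≠ m) (hpl : p ∈ l) (hpm : p ∈ m) (hql : q ∈ l)
    (hqm : q ∈ m) : p = q :=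
  (Nondegenerate.eq_or_eq hpl hql hpm hqm).resolve_right hlm

theorem line_eq_of_mem_of_mem (hpq : p ≠ q) (hpl : p ∈ l) (hql : q ∈ l) (hpm : p ∈ m)
    (hqm : q ∈ m) : l = m :=
  (Nondegenerate.eq_or_eq hpl hql hpm hqm).resolve_left hpq

theorem notMem_of_mem_of_ne (hlm : l ≠ m) (hpl : p ∈ l) (hpm : p ∈ m) (hxl : x ∈ l)
    (hxp : x ≠ p) : x ∉ m :=
  fun hxm => hxp (point_eq_of_mem_of_mem hlm hxl hxm hpl hpm)

theorem notMem_of_transversal (hmm' : m ≠ m') (hzm : z ∈ m) (hzm' : z ∈ m') (hxm : x ∈ m)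
    (hym' : y ∈ m') (hxn : x ∈ n) (hyn : y ∈ n) (hxz : x ≠ z) (hyz : y ≠ z) : z ∉ n :=
  fun hzn => notMem_of_mem_of_ne hmm' hzm hzm'
    (line_eq_of_mem_of_mem hxz hxn hzn hxm hzm ▸ hyn) hyz hym'

theorem DesarguesProperty.exists_mem_axis (hdes : DesarguesProperty P L)
    {A B C A' B' C' O Y Z : P} {ab bc ca ab' bc' ca' m : L}
    (ht : IsTriangle P L A B C ab bc ca) (ht' : IsTriangle P L A' B' C' ab' bc' ca')
    (hd : DistinctTriangles P L A B C A' B' C' ab bc ca ab' bc' ca')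
    (hO : PerspectiveFromCenter P L A B C A' B' C' ab bc ca ab' bc' ca' O)
    (hY : Y ∈ bc) (hY' : Y ∈ bc') (hZ : Z ∈ ca) (hZ' : Z ∈ ca') (hYZ : Y ≠ Z)
    (hYm : Y ∈ m) (hZm : Z ∈ m) : ∃ X, X ∈ ab ∧ X ∈ ab' ∧ X ∈ m := by
  obtain ⟨n, ⟨X, hX, hX', hXn⟩, ⟨Y₀, hY₀, hY₀', hY₀n⟩, ⟨Z₀, hZ₀, hZ₀', hZ₀n⟩, -⟩ :=
    hdes A B C A' B' C' ab bc ca ab' bc' ca' O ht ht' hd hO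
  obtain rfl := point_eq_of_mem_of_mem hd.2.2.2.2.1 hY₀ hY₀' hY hY'
  obtain rfl := point_eq_of_mem_of_mem hd.2.2.2.2.2 hZ₀ hZ₀' hZ hZ'
  exact ⟨X, hX, hX', line_eq_of_mem_of_mem hYZ hY₀n hZ₀n hYm hZm ▸ hXn⟩

/-- Two points of `m` never lie on a common line other than `m`, so each line of `ls` rules out
at most one point of `m`. -/
theorem LinesHaveAtLeast.exists_mem_notMem {n : ℕ} (h : LinesHaveAtLeast P L n) (m : L)
    (s : Finset P) (ls : Finset L) (hm : m ∉ ls) (hcard : #s + #ls < n) :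
    ∃ x ∈ m, x ∉ s ∧ ∀ l ∈ ls, x ∉ l := by
  classical
  obtain ⟨t, ht, htm⟩ := h m
  by_contra! hcov
  have hsub : t ⊆ s ∪ ls.biUnion fun l => t.filter (· ∈ l) := by
    intro x hx
    by_cases hxs : x ∈ s
    · exact mem_union_left _ hxs
    obtain ⟨l, hl, hxl⟩ := hcov x (htm x hx) hxs
    exact mem_union_right _ (mem_biUnion.2 ⟨l, hl, mem_filter.2 ⟨hx, hxl⟩⟩)
  have hfiber : ∀ l ∈ ls, #(t.filter (· ∈ l)) ≤ 1 := fun l hl =>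
    card_le_one.2 fun x hx y hy => point_eq_of_mem_of_mem (ne_of_mem_of_not_mem hl hm)
      (mem_filter.1 hx).2 (htm x (mem_filter.1 hx).1) (mem_filter.1 hy).2
      (htm y (mem_filter.1 hy).1)
  have := (card_le_card hsub).trans ((card_union_le _ _).trans
    (Nat.add_le_add_left (card_biUnion_le_card_mul ls _ 1 hfiber) _))
  omega

end Nondegenerate

theorem LinesHaveAtLeast.exists_line_mem_notMem [HasLines P L] {n : ℕ}
    (h : LinesHaveAtLeast P L n) (p : P) (ls : Finset L) (hcard : #ls < n) :
    ∃ l : L, p ∈ l ∧ l ∉ ls := by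
  classical
  obtain ⟨m, hpm⟩ := Nondegenerate.exists_line (L := L) p
  obtain ⟨x, hxm, -, hx⟩ := h.exists_mem_notMem m ∅ (ls.erase m) (notMem_erase m ls)
    (by simpa using (card_erase_le).trans_lt hcard)
  have hpx : p ≠ x := fun h => hpm (h ▸ hxm)
  obtain ⟨hp, hx'⟩ := HasLines.mkLine_ax (L := L) hpx
  exact ⟨_, hp, fun hls => hx _ (mem_erase.2 ⟨ne_of_mem_of_not_mem' hp hpm, hls⟩) hx'⟩

end Incidence

section Harmonic

variable {P L}

theorem eq_of_col_of_mem_l [Nondegenerate P L] {A B R Pp Q S D : P} {ab l : L} (hAB : A ≠ B)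
    (hA : A ∈ ab) (hB : B ∈ ab) (hAl : A ∈ l) (hlab : l ≠ ab) (hRab : R ∉ ab) (hRl : R ∉ l)
    (hPl : Pp ∈ l) (hBRP : Col P L B R Pp) (hQl : Q ∈ l) (hARQ : Col P L A R Q)
    (hAPS : Col P L A Pp S) (hBQS : Col P L B Q S) (hD : D ∈ ab) (hRSD : Col P L R S D) :
    D = A := by
  obtain ⟨br, hBbr, hRbr, hPbr⟩ := hBRP
  obtain ⟨ar, hAar, hRar, hQar⟩ := hARQ
  obtain ⟨ap, hAap, hPap, hSap⟩ := hAPS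
  obtain ⟨bq, hBbq, hQbq, hSbq⟩ := hBQS
  obtain ⟨rs, hRrs, hSrs, hDrs⟩ := hRSD
  have hQA : Q = A :=
    point_eq_of_mem_of_mem (ne_of_mem_of_not_mem' hRar hRl) hQar hQl hAar hAl
  have hbq : bq = ab := line_eq_of_mem_of_mem hAB.symm hBbq (hQA ▸ hQbq) hB hA
  have hPab : Pp ∉ ab := fun h => hRab <| line_eq_of_mem_of_mem hAB
    (point_eq_of_mem_of_mem hlab hPl h hAl hA ▸ hPbr) hBbr hA hB ▸ hRbr
  have hSA : S = A :=
    point_eq_of_mem_of_mem (ne_of_mem_of_not_mem' hPap hPab) hSap (hbq ▸ hSbq) hAap hA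
  have hrs : rs = ar :=
    line_eq_of_mem_of_mem (ne_of_mem_of_not_mem hA hRab) (hSA ▸ hSrs) hRrs hAar hRar
  exact point_eq_of_mem_of_mem (ne_of_mem_of_not_mem' hRar hRab) (hrs ▸ hDrs) hD hAar hA

/-- The auxiliary figure of the harmonic construction: `Pp = BR·l`, `Q = AR·l`, `S = AP·BQ`,
with `ar = AR`, `br = BR`, `ap = AP`, `bq = BQ`. -/
structure HarmonicQuad (A B C : P) (ab : L) where
  l : L
  R : P
  Pp : P
  Q : P
  S : P
  ar : L
  br : L
  ap : L
  bq : L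
  A_ne_B : A ≠ B
  A_mem_ab : A ∈ ab
  B_mem_ab : B ∈ ab
  C_mem_ab : C ∈ ab
  C_ne_A : C ≠ A
  C_ne_B : C ≠ B
  C_mem_l : C ∈ l
  l_ne_ab : l ≠ ab
  R_notMem_ab : R ∉ ab
  R_notMem_l : R ∉ l
  Pp_mem_l : Pp ∈ l
  Q_mem_l : Q ∈ l
  A_mem_ar : A ∈ ar
  R_mem_ar : R ∈ ar
  Q_mem_ar : Q ∈ ar
  B_mem_br : B ∈ br
  R_mem_br : R ∈ br
  Pp_mem_br : Pp ∈ br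
  A_mem_ap : A ∈ ap
  Pp_mem_ap : Pp ∈ ap
  S_mem_ap : S ∈ ap
  B_mem_bq : B ∈ bq
  Q_mem_bq : Q ∈ bq
  S_mem_bq : S ∈ bq

namespace HarmonicQuad

variable {A B C : P} {ab : L}

theorem exists_of_col (hAB : A ≠ B) (hA : A ∈ ab) (hB : B ∈ ab) (hC : C ∈ ab) (hCA : C ≠ A)
    (hCB : C ≠ B) {l : L} (hCl : C ∈ l) (hlab : l ≠ ab) {R Pp Q S : P} (hRab : R ∉ ab)
    (hRl : R ∉ l) (hPl : Pp ∈ l) (hBRP : Col P L B R Pp) (hQl : Q ∈ l) (hARQ : Col P L A R Q)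
    (hAPS : Col P L A Pp S) (hBQS : Col P L B Q S) :
    ∃ f : HarmonicQuad A B C ab, f.R = R ∧ f.S = S := by
  obtain ⟨br, hBbr, hRbr, hPbr⟩ := hBRP
  obtain ⟨ar, hAar, hRar, hQar⟩ := hARQ
  obtain ⟨ap, hAap, hPap, hSap⟩ := hAPS
  obtain ⟨bq, hBbq, hQbq, hSbq⟩ := hBQS
  exact ⟨⟨l, R, Pp, Q, S, ar, br, ap, bq, hAB, hA, hB, hC, hCA, hCB, hCl, hlab, hRab, hRl, hPl,
    hQl, hAar, hRar, hQar, hBbr, hRbr, hPbr, hAap, hPap, hSap, hBbq, hQbq, hSbq⟩, rfl, rfl⟩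

structure Generic (f g : HarmonicQuad A B C ab) : Prop where
  l_ne : f.l ≠ g.l
  ar_ne : f.ar ≠ g.ar
  br_ne : f.br ≠ g.br
  ap_ne : f.ap ≠ g.ap
  bq_ne : f.bq ≠ g.bq

theorem Generic.symm {f g : HarmonicQuad A B C ab} (hfg : Generic f g) : Generic g f :=
  ⟨hfg.l_ne.symm, hfg.ar_ne.symm, hfg.br_ne.symm, hfg.ap_ne.symm, hfg.bq_ne.symm⟩

theorem Generic.of_notMem {f g : HarmonicQuad A B C ab} (hl : f.l ≠ g.l) (hQar : g.Q ∉ f.ar)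
    (hPbr : g.Pp ∉ f.br) (hPap : g.Pp ∉ f.ap) (hQbq : g.Q ∉ f.bq) : Generic f g :=
  ⟨hl, (ne_of_mem_of_not_mem' g.Q_mem_ar hQar).symm,
    (ne_of_mem_of_not_mem' g.Pp_mem_br hPbr).symm, (ne_of_mem_of_not_mem' g.Pp_mem_ap hPap).symm,
    (ne_of_mem_of_not_mem' g.Q_mem_bq hQbq).symm⟩

variable (f : HarmonicQuad A B C ab)

theorem ar_ne_ab : f.ar ≠ ab := ne_of_mem_of_not_mem' f.R_mem_ar f.R_notMem_ab

theorem br_ne_ab : f.br ≠ ab := ne_of_mem_of_not_mem' f.R_mem_br f.R_notMem_ab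

theorem Pp_ne_R : f.Pp ≠ f.R := ne_of_mem_of_not_mem f.Pp_mem_l f.R_notMem_l

theorem Q_ne_R : f.Q ≠ f.R := ne_of_mem_of_not_mem f.Q_mem_l f.R_notMem_l

variable [ProjectivePlane P L]

theorem A_notMem_l : A ∉ f.l :=
  notMem_of_mem_of_ne f.l_ne_ab.symm f.C_mem_ab f.C_mem_l f.A_mem_ab f.C_ne_A.symm

theorem B_notMem_l : B ∉ f.l :=
  notMem_of_mem_of_ne f.l_ne_ab.symm f.C_mem_ab f.C_mem_l f.B_mem_ab f.C_ne_B.symm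

theorem C_notMem_ar : C ∉ f.ar :=
  notMem_of_mem_of_ne f.ar_ne_ab.symm f.A_mem_ab f.A_mem_ar f.C_mem_ab f.C_ne_A

theorem C_notMem_br : C ∉ f.br :=
  notMem_of_mem_of_ne f.br_ne_ab.symm f.B_mem_ab f.B_mem_br f.C_mem_ab f.C_ne_B

theorem B_notMem_ar : B ∉ f.ar :=
  notMem_of_mem_of_ne f.ar_ne_ab.symm f.A_mem_ab f.A_mem_ar f.B_mem_ab f.A_ne_B.symm

theorem Pp_ne_C : f.Pp ≠ C := ne_of_mem_of_not_mem f.Pp_mem_br f.C_notMem_br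

theorem Q_ne_C : f.Q ≠ C := ne_of_mem_of_not_mem f.Q_mem_ar f.C_notMem_ar

theorem Pp_notMem_ab : f.Pp ∉ ab :=
  notMem_of_mem_of_ne f.l_ne_ab f.C_mem_l f.C_mem_ab f.Pp_mem_l f.Pp_ne_C

theorem Q_notMem_ab : f.Q ∉ ab :=
  notMem_of_mem_of_ne f.l_ne_ab f.C_mem_l f.C_mem_ab f.Q_mem_l f.Q_ne_C

theorem ar_ne_br : f.ar ≠ f.br := fun h =>
  f.ar_ne_ab (line_eq_of_mem_of_mem f.A_ne_B f.A_mem_ar (h ▸ f.B_mem_br) f.A_mem_ab f.B_mem_ab)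

theorem Pp_ne_Q : f.Pp ≠ f.Q := fun h =>
  notMem_of_mem_of_ne f.ar_ne_br.symm f.R_mem_br f.R_mem_ar f.Pp_mem_br f.Pp_ne_R
    (h ▸ f.Q_mem_ar)

theorem Pp_notMem_bq : f.Pp ∉ f.bq :=
  notMem_of_mem_of_ne (ne_of_mem_of_not_mem' f.B_mem_bq f.B_notMem_l).symm f.Q_mem_l f.Q_mem_bq
    f.Pp_mem_l f.Pp_ne_Q

theorem S_ne_Pp : f.S ≠ f.Pp := ne_of_mem_of_not_mem f.S_mem_bq f.Pp_notMem_bq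

theorem ap_ne_ab : f.ap ≠ ab := ne_of_mem_of_not_mem' f.Pp_mem_ap f.Pp_notMem_ab

theorem bq_ne_ab : f.bq ≠ ab := ne_of_mem_of_not_mem' f.Q_mem_bq f.Q_notMem_ab

theorem S_notMem_ab : f.S ∉ ab := fun h => f.A_ne_B <|
  (point_eq_of_mem_of_mem f.ap_ne_ab f.S_mem_ap h f.A_mem_ap f.A_mem_ab).symm.trans
    (point_eq_of_mem_of_mem f.bq_ne_ab f.S_mem_bq h f.B_mem_bq f.B_mem_ab)

theorem A_notMem_bq : A ∉ f.bq :=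
  notMem_of_mem_of_ne f.bq_ne_ab.symm f.B_mem_ab f.B_mem_bq f.A_mem_ab f.A_ne_B

theorem S_notMem_ar : f.S ∉ f.ar := by
  have hPar : f.Pp ∉ f.ar :=
    notMem_of_mem_of_ne f.ar_ne_br.symm f.R_mem_br f.R_mem_ar f.Pp_mem_br f.Pp_ne_R
  exact notMem_of_mem_of_ne (ne_of_mem_of_not_mem' f.Pp_mem_ap hPar) f.A_mem_ap f.A_mem_ar
    f.S_mem_ap (ne_of_mem_of_not_mem f.A_mem_ab f.S_notMem_ab).symm

theorem R_notMem_bq : f.R ∉ f.bq :=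
  notMem_of_mem_of_ne (ne_of_mem_of_not_mem' f.B_mem_bq f.B_notMem_ar).symm f.Q_mem_ar
    f.Q_mem_bq f.R_mem_ar f.Q_ne_R.symm

theorem R_ne_S : f.R ≠ f.S := ne_of_mem_of_not_mem f.R_mem_ar f.S_notMem_ar

noncomputable def rs : L := HasLines.mkLine f.R_ne_S

theorem R_mem_rs : f.R ∈ f.rs := (HasLines.mkLine_ax f.R_ne_S).1

theorem S_mem_rs : f.S ∈ f.rs := (HasLines.mkLine_ax f.R_ne_S).2

theorem rs_ne_ab : f.rs ≠ ab := ne_of_mem_of_not_mem' f.R_mem_rs f.R_notMem_ab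

noncomputable def D : P := HasPoints.mkPoint f.rs_ne_ab

theorem D_mem_rs : f.D ∈ f.rs := (HasPoints.mkPoint_ax f.rs_ne_ab).1

theorem D_mem_ab : f.D ∈ ab := (HasPoints.mkPoint_ax f.rs_ne_ab).2

theorem eq_D {X : P} (hX : X ∈ ab) (hcol : Col P L f.R f.S X) : X = f.D := by
  obtain ⟨m, hR, hS, hXm⟩ := hcol
  obtain rfl := line_eq_of_mem_of_mem f.R_ne_S hR hS f.R_mem_rs f.S_mem_rs
  exact point_eq_of_mem_of_mem f.rs_ne_ab hXm hX f.D_mem_rs f.D_mem_ab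

theorem isTriangle : IsTriangle P L f.R f.S f.Q f.rs f.bq f.ar :=
  ⟨f.R_mem_rs, f.S_mem_rs, f.S_mem_bq, f.Q_mem_bq, f.Q_mem_ar, f.R_mem_ar, f.R_notMem_bq,
    f.S_notMem_ar, notMem_of_mem_of_ne (ne_of_mem_of_not_mem' f.S_mem_rs f.S_notMem_ar).symm
      f.R_mem_ar f.R_mem_rs f.Q_mem_ar f.Q_ne_R⟩

namespace Generic

variable {f} {g : HarmonicQuad A B C ab}

theorem Pp_notMem_l (hfg : Generic f g) : f.Pp ∉ g.l :=
  notMem_of_mem_of_ne hfg.l_ne f.C_mem_l g.C_mem_l f.Pp_mem_l f.Pp_ne_C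

theorem Q_notMem_l (hfg : Generic f g) : f.Q ∉ g.l :=
  notMem_of_mem_of_ne hfg.l_ne f.C_mem_l g.C_mem_l f.Q_mem_l f.Q_ne_C

theorem Pp_notMem_br (hfg : Generic f g) : f.Pp ∉ g.br :=
  notMem_of_mem_of_ne hfg.br_ne f.B_mem_br g.B_mem_br f.Pp_mem_br
    (ne_of_mem_of_not_mem f.Pp_mem_l f.B_notMem_l)

theorem Q_notMem_ar (hfg : Generic f g) : f.Q ∉ g.ar :=
  notMem_of_mem_of_ne hfg.ar_ne f.A_mem_ar g.A_mem_ar f.Q_mem_ar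
    (ne_of_mem_of_not_mem f.Q_mem_l f.A_notMem_l)

theorem Pp_notMem_ap (hfg : Generic f g) : f.Pp ∉ g.ap :=
  notMem_of_mem_of_ne hfg.ap_ne f.A_mem_ap g.A_mem_ap f.Pp_mem_ap
    (ne_of_mem_of_not_mem f.Pp_mem_l f.A_notMem_l)

theorem Q_notMem_bq (hfg : Generic f g) : f.Q ∉ g.bq :=
  notMem_of_mem_of_ne hfg.bq_ne f.B_mem_bq g.B_mem_bq f.Q_mem_bq
    (ne_of_mem_of_not_mem f.Q_mem_l f.B_notMem_l)

theorem S_notMem_bq (hfg : Generic f g) : f.S ∉ g.bq :=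
  notMem_of_mem_of_ne hfg.bq_ne f.B_mem_bq g.B_mem_bq f.S_mem_bq
    (ne_of_mem_of_not_mem f.B_mem_ab f.S_notMem_ab).symm

theorem Pp_ne (hfg : Generic f g) : f.Pp ≠ g.Pp :=
  (ne_of_mem_of_not_mem g.Pp_mem_l hfg.Pp_notMem_l).symm

theorem Q_ne (hfg : Generic f g) : f.Q ≠ g.Q :=
  (ne_of_mem_of_not_mem g.Q_mem_l hfg.Q_notMem_l).symm

theorem S_ne (hfg : Generic f g) : f.S ≠ g.S :=
  (ne_of_mem_of_not_mem g.S_mem_bq hfg.S_notMem_bq).symm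

theorem R_ne (hfg : Generic f g) : f.R ≠ g.R := fun h => hfg.ar_ne <|
  line_eq_of_mem_of_mem (ne_of_mem_of_not_mem f.A_mem_ab f.R_notMem_ab) f.A_mem_ar f.R_mem_ar
    g.A_mem_ar (h ▸ g.R_mem_ar)

variable {p q r s : L} {O : P}

theorem join_Pp_ne_join_Q (hfg : Generic f g) (hp : f.Pp ∈ p) (hp' : g.Pp ∈ p) (hq : f.Q ∈ q) :
    p ≠ q := fun h => hfg.symm.Pp_notMem_l <|
  line_eq_of_mem_of_mem f.Pp_ne_Q hp (h ▸ hq) f.Pp_mem_l f.Q_mem_l ▸ hp'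

theorem C_notMem_join_Pp (hfg : Generic f g) (hp : f.Pp ∈ p) (hp' : g.Pp ∈ p) : C ∉ p :=
  notMem_of_transversal hfg.l_ne f.C_mem_l g.C_mem_l f.Pp_mem_l g.Pp_mem_l hp hp' f.Pp_ne_C
    g.Pp_ne_C

theorem mem_join_R (hdes : DesarguesProperty P L) (hfg : Generic f g) (hp : f.Pp ∈ p)
    (hp' : g.Pp ∈ p) (hq : f.Q ∈ q) (hq' : g.Q ∈ q) (hOp : O ∈ p) (hOq : O ∈ q)
    (hr : f.R ∈ r) (hr' : g.R ∈ r) : O ∈ r := by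
  have hpq := hfg.join_Pp_ne_join_Q hp hp' hq
  have hBp : B ∉ p := notMem_of_transversal hfg.br_ne f.B_mem_br g.B_mem_br f.Pp_mem_br
    g.Pp_mem_br hp hp' (ne_of_mem_of_not_mem f.Pp_mem_l f.B_notMem_l)
    (ne_of_mem_of_not_mem g.Pp_mem_l g.B_notMem_l)
  have hAq : A ∉ q := notMem_of_transversal hfg.ar_ne f.A_mem_ar g.A_mem_ar f.Q_mem_ar
    g.Q_mem_ar hq hq' (ne_of_mem_of_not_mem f.Q_mem_l f.A_notMem_l)
    (ne_of_mem_of_not_mem g.Q_mem_l g.A_notMem_l)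
  have hCq : C ∉ q := notMem_of_transversal hfg.l_ne f.C_mem_l g.C_mem_l f.Q_mem_l g.Q_mem_l
    hq hq' f.Q_ne_C g.Q_ne_C
  obtain ⟨X, hXp, hXq, hXr⟩ := hdes.exists_mem_axis (O := C)
    (A := f.Pp) (B := g.Pp) (C := B) (ab := p) (bc := g.br) (ca := f.br)
    (A' := f.Q) (B' := g.Q) (C' := A) (ab' := q) (bc' := g.ar) (ca' := f.ar)
    ⟨hp, hp', g.Pp_mem_br, g.B_mem_br, f.B_mem_br, f.Pp_mem_br, hfg.Pp_notMem_br,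
      hfg.symm.Pp_notMem_br, hBp⟩
    ⟨hq, hq', g.Q_mem_ar, g.A_mem_ar, f.A_mem_ar, f.Q_mem_ar, hfg.Q_notMem_ar,
      hfg.symm.Q_notMem_ar, hAq⟩
    ⟨f.Pp_ne_Q, g.Pp_ne_Q, f.A_ne_B.symm, hpq, g.ar_ne_br.symm, f.ar_ne_br.symm⟩
    ⟨⟨f.l, f.Pp_mem_l, f.Q_mem_l, f.C_mem_l⟩, ⟨g.l, g.Pp_mem_l, g.Q_mem_l, g.C_mem_l⟩,
      ⟨ab, f.B_mem_ab, f.A_mem_ab, f.C_mem_ab⟩, hfg.C_notMem_join_Pp hp hp', g.C_notMem_br,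
      f.C_notMem_br, hCq, g.C_notMem_ar, f.C_notMem_ar⟩
    g.R_mem_br g.R_mem_ar f.R_mem_br f.R_mem_ar hfg.R_ne.symm hr' hr
  exact point_eq_of_mem_of_mem hpq hXp hXq hOp hOq ▸ hXr

theorem mem_join_S (hdes : DesarguesProperty P L) (hfg : Generic f g) (hp : f.Pp ∈ p)
    (hp' : g.Pp ∈ p) (hq : f.Q ∈ q) (hq' : g.Q ∈ q) (hOp : O ∈ p) (hOq : O ∈ q)
    (hs : f.S ∈ s) (hs' : g.S ∈ s) : O ∈ s := by
  have hAp : A ∉ p := notMem_of_transversal hfg.ap_ne f.A_mem_ap g.A_mem_ap f.Pp_mem_ap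
    g.Pp_mem_ap hp hp' (ne_of_mem_of_not_mem f.Pp_mem_l f.A_notMem_l)
    (ne_of_mem_of_not_mem g.Pp_mem_l g.A_notMem_l)
  have hAs : A ∉ s := notMem_of_transversal hfg.ap_ne f.A_mem_ap g.A_mem_ap f.S_mem_ap
    g.S_mem_ap hs hs' (ne_of_mem_of_not_mem f.A_mem_ab f.S_notMem_ab).symm
    (ne_of_mem_of_not_mem g.A_mem_ab g.S_notMem_ab).symm
  have hBs : B ∉ s := notMem_of_transversal hfg.bq_ne f.B_mem_bq g.B_mem_bq f.S_mem_bq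
    g.S_mem_bq hs hs' (ne_of_mem_of_not_mem f.B_mem_ab f.S_notMem_ab).symm
    (ne_of_mem_of_not_mem g.B_mem_ab g.S_notMem_ab).symm
  have hps : p ≠ s := fun h => hfg.symm.Pp_notMem_ap <|
    line_eq_of_mem_of_mem f.S_ne_Pp.symm hp (h ▸ hs) f.Pp_mem_ap f.S_mem_ap ▸ hp'
  obtain ⟨X, hXp, hXs, hXq⟩ := hdes.exists_mem_axis (O := A)
    (A := f.Pp) (B := g.Pp) (C := C) (ab := p) (bc := g.l) (ca := f.l)
    (A' := f.S) (B' := g.S) (C' := B) (ab' := s) (bc' := g.bq) (ca' := f.bq)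
    ⟨hp, hp', g.Pp_mem_l, g.C_mem_l, f.C_mem_l, f.Pp_mem_l, hfg.Pp_notMem_l,
      hfg.symm.Pp_notMem_l, hfg.C_notMem_join_Pp hp hp'⟩
    ⟨hs, hs', g.S_mem_bq, g.B_mem_bq, f.B_mem_bq, f.S_mem_bq, hfg.S_notMem_bq,
      hfg.symm.S_notMem_bq, hBs⟩
    ⟨f.S_ne_Pp.symm, g.S_ne_Pp.symm, f.C_ne_B, hps,
      (ne_of_mem_of_not_mem' g.B_mem_bq g.B_notMem_l).symm,
      (ne_of_mem_of_not_mem' f.B_mem_bq f.B_notMem_l).symm⟩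
    ⟨⟨f.ap, f.Pp_mem_ap, f.S_mem_ap, f.A_mem_ap⟩, ⟨g.ap, g.Pp_mem_ap, g.S_mem_ap, g.A_mem_ap⟩,
      ⟨ab, f.C_mem_ab, f.B_mem_ab, f.A_mem_ab⟩, hAp, g.A_notMem_l, f.A_notMem_l, hAs,
      g.A_notMem_bq, f.A_notMem_bq⟩
    g.Q_mem_l g.Q_mem_bq f.Q_mem_l f.Q_mem_bq hfg.Q_ne.symm hq' hq
  exact point_eq_of_mem_of_mem (hfg.join_Pp_ne_join_Q hp hp' hq) hXp hXq hOp hOq ▸ hXs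

theorem notMem_of_mem_joins (hfg : Generic f g) (hrs : f.rs ≠ g.rs) (hp : f.Pp ∈ p)
    (hp' : g.Pp ∈ p) (hq : f.Q ∈ q) (hq' : g.Q ∈ q) (hr : f.R ∈ r) (hr' : g.R ∈ r)
    (hs : f.S ∈ s) (hs' : g.S ∈ s) (hOp : O ∈ p) (hOq : O ∈ q) (hOr : O ∈ r) (hOs : O ∈ s) :
    O ∉ f.rs ∧ O ∉ f.bq ∧ O ∉ f.ar := by
  have hQp : f.Q ∉ p := fun h => hfg.symm.Pp_notMem_l <|
    line_eq_of_mem_of_mem f.Pp_ne_Q hp h f.Pp_mem_l f.Q_mem_l ▸ hp'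
  have hRq : f.R ∉ q := fun h => hfg.symm.Q_notMem_ar <|
    line_eq_of_mem_of_mem f.Q_ne_R hq h f.Q_mem_ar f.R_mem_ar ▸ hq'
  have hSp : f.S ∉ p := fun h => hfg.symm.Pp_notMem_ap <|
    line_eq_of_mem_of_mem f.S_ne_Pp.symm hp h f.Pp_mem_ap f.S_mem_ap ▸ hp'
  have hOQ : O ≠ f.Q := ne_of_mem_of_not_mem hOp hQp
  refine ⟨fun hO => hrs ?_,
    notMem_of_mem_of_ne (ne_of_mem_of_not_mem' hq' hfg.symm.Q_notMem_bq) hq f.Q_mem_bq hOq hOQ,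
    notMem_of_mem_of_ne (ne_of_mem_of_not_mem' hq' hfg.symm.Q_notMem_ar) hq f.Q_mem_ar hOq hOQ⟩
  -- `O ∈ RS` would force `RS = RR' = SS'`, hence `RS = R'S'`.
  have hrsr := line_eq_of_mem_of_mem (ne_of_mem_of_not_mem hOq hRq) hO f.R_mem_rs hOr hr
  have hrss := line_eq_of_mem_of_mem (ne_of_mem_of_not_mem hOp hSp) hO f.S_mem_rs hOs hs
  exact line_eq_of_mem_of_mem g.R_ne_S (hrsr ▸ hr') (hrss ▸ hs') g.R_mem_rs g.S_mem_rs

theorem D_eq_of_ne_rs (hdes : DesarguesProperty P L) (hfg : Generic f g) (hrs : f.rs ≠ g.rs)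
    (hp : f.Pp ∈ p) (hp' : g.Pp ∈ p) (hq : f.Q ∈ q) (hq' : g.Q ∈ q) (hr : f.R ∈ r)
    (hr' : g.R ∈ r) (hs : f.S ∈ s) (hs' : g.S ∈ s) (hOp : O ∈ p) (hOq : O ∈ q) (hOr : O ∈ r)
    (hOs : O ∈ s) : f.D = g.D := by
  obtain ⟨hOrs, hObq, hOar⟩ :=
    hfg.notMem_of_mem_joins hrs hp hp' hq hq' hr hr' hs hs' hOp hOq hOr hOs
  obtain ⟨hOrs', hObq', hOar'⟩ :=
    hfg.symm.notMem_of_mem_joins hrs.symm hp' hp hq' hq hr' hr hs' hs hOp hOq hOr hOs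
  obtain ⟨X, hXf, hXg, hXab⟩ := hdes.exists_mem_axis f.isTriangle g.isTriangle
    ⟨hfg.R_ne, hfg.S_ne, hfg.Q_ne, hrs, hfg.bq_ne, hfg.ar_ne⟩
    ⟨⟨r, hr, hr', hOr⟩, ⟨s, hs, hs', hOs⟩, ⟨q, hq, hq', hOq⟩, hOrs, hObq, hOar, hOrs', hObq',
      hOar'⟩
    f.B_mem_bq g.B_mem_bq f.A_mem_ar g.A_mem_ar f.A_ne_B.symm f.B_mem_ab f.A_mem_ab
  exact (point_eq_of_mem_of_mem f.rs_ne_ab f.D_mem_rs f.D_mem_ab hXf hXab).trans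
    (point_eq_of_mem_of_mem g.rs_ne_ab hXg hXab g.D_mem_rs g.D_mem_ab)

theorem D_eq (hdes : DesarguesProperty P L) (hfg : Generic f g) : f.D = g.D := by
  by_cases hrs : f.rs = g.rs
  · exact point_eq_of_mem_of_mem f.rs_ne_ab f.D_mem_rs f.D_mem_ab (hrs ▸ g.D_mem_rs) g.D_mem_ab
  obtain ⟨p, hp, hp'⟩ := (HasLines.existsUnique_line P L _ _ hfg.Pp_ne).exists
  obtain ⟨q, hq, hq'⟩ := (HasLines.existsUnique_line P L _ _ hfg.Q_ne).exists
  obtain ⟨r, hr, hr'⟩ := (HasLines.existsUnique_line P L _ _ hfg.R_ne).exists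
  obtain ⟨s, hs, hs'⟩ := (HasLines.existsUnique_line P L _ _ hfg.S_ne).exists
  obtain ⟨O, hOp, hOq⟩ :=
    (HasPoints.existsUnique_point P L _ _ (hfg.join_Pp_ne_join_Q hp hp' hq)).exists
  exact hfg.D_eq_of_ne_rs hdes hrs hp hp' hq hq' hr hr' hs hs' hOp hOq
    (hfg.mem_join_R hdes hp hp' hq hq' hOp hOq hr hr')
    (hfg.mem_join_S hdes hp hp' hq hq' hOp hOq hs hs')

end Generic

theorem exists_of_mem_l (hAB : A ≠ B) (hA : A ∈ ab) (hB : B ∈ ab) (hC : C ∈ ab) (hCA : C ≠ A)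
    (hCB : C ≠ B) {l : L} (hCl : C ∈ l) (hlab : l ≠ ab) {X Y : P} (hX : X ∈ l) (hY : Y ∈ l)
    (hXab : X ∉ ab) (hYab : Y ∉ ab) (hXY : X ≠ Y) :
    ∃ k : HarmonicQuad A B C ab, k.l = l ∧ k.Pp = X ∧ k.Q = Y := by
  have hAl : A ∉ l := notMem_of_mem_of_ne hlab.symm hC hCl hA hCA.symm
  have hBl : B ∉ l := notMem_of_mem_of_ne hlab.symm hC hCl hB hCB.symm
  obtain ⟨ar, hAar, hYar⟩ :=
    (HasLines.existsUnique_line P L _ _ (ne_of_mem_of_not_mem hA hYab)).exists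
  obtain ⟨br, hBbr, hXbr⟩ :=
    (HasLines.existsUnique_line P L _ _ (ne_of_mem_of_not_mem hB hXab)).exists
  obtain ⟨ap, hAap, hXap⟩ :=
    (HasLines.existsUnique_line P L _ _ (ne_of_mem_of_not_mem hA hXab)).exists
  obtain ⟨bq, hBbq, hYbq⟩ :=
    (HasLines.existsUnique_line P L _ _ (ne_of_mem_of_not_mem hB hYab)).exists
  have harab : ar ≠ ab := ne_of_mem_of_not_mem' hYar hYab
  have hbrab : br ≠ ab := ne_of_mem_of_not_mem' hXbr hXab
  have harbr : ar ≠ br := fun h =>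
    harab (line_eq_of_mem_of_mem hAB hAar (h ▸ hBbr) hA hB)
  have hapbq : ap ≠ bq := fun h =>
    ne_of_mem_of_not_mem' hXap hXab (line_eq_of_mem_of_mem hAB hAap (h ▸ hBbq) hA hB)
  obtain ⟨R, hRar, hRbr⟩ := (HasPoints.existsUnique_point P L _ _ harbr).exists
  obtain ⟨S, hSap, hSbq⟩ := (HasPoints.existsUnique_point P L _ _ hapbq).exists
  have hRab : R ∉ ab := fun h => hAB <|
    (point_eq_of_mem_of_mem harab hRar h hAar hA).symm.trans
      (point_eq_of_mem_of_mem hbrab hRbr h hBbr hB)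
  have hRl : R ∉ l := fun h => hXY <|
    (point_eq_of_mem_of_mem (ne_of_mem_of_not_mem' hBbr hBl) hRbr h hXbr hX).symm.trans
      (point_eq_of_mem_of_mem (ne_of_mem_of_not_mem' hAar hAl) hRar h hYar hY)
  exact ⟨⟨l, R, X, Y, S, ar, br, ap, bq, hAB, hA, hB, hC, hCA, hCB, hCl, hlab, hRab, hRl, hX, hY,
    hAar, hRar, hYar, hBbr, hRbr, hXbr, hAap, hXap, hSap, hBbq, hYbq, hSbq⟩, rfl, rfl, rfl⟩

/-- The new `Pp` must avoid `AB` and both given `BR`, `AP`; the new `Q` must avoid `AB`, both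
given `AR`, `BQ`, and the new `Pp`: at most six points of the new `l`, hence seven suffice. -/
theorem exists_generic (h7 : LinesHaveAtLeast P L 7) (f g : HarmonicQuad A B C ab) :
    ∃ k : HarmonicQuad A B C ab, Generic f k ∧ Generic g k := by
  classical
  obtain ⟨l, hCl, hl⟩ :=
    h7.exists_line_mem_notMem C {ab, f.l, g.l} (card_le_three.trans_lt (by norm_num))
  simp only [mem_insert, mem_singleton, not_or] at hl
  obtain ⟨hlab, hlf, hlg⟩ := hl
  have hAl : A ∉ l := notMem_of_mem_of_ne (Ne.symm hlab) f.C_mem_ab hCl f.A_mem_ab f.C_ne_A.symm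
  have hBl : B ∉ l := notMem_of_mem_of_ne (Ne.symm hlab) f.C_mem_ab hCl f.B_mem_ab f.C_ne_B.symm
  have hlbr (k : HarmonicQuad A B C ab) : l ≠ k.br := (ne_of_mem_of_not_mem' k.B_mem_br hBl).symm
  have hlap (k : HarmonicQuad A B C ab) : l ≠ k.ap := (ne_of_mem_of_not_mem' k.A_mem_ap hAl).symm
  have hlar (k : HarmonicQuad A B C ab) : l ≠ k.ar := (ne_of_mem_of_not_mem' k.A_mem_ar hAl).symm
  have hlbq (k : HarmonicQuad A B C ab) : l ≠ k.bq := (ne_of_mem_of_not_mem' k.B_mem_bq hBl).symm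
  obtain ⟨X, hXl, -, hX⟩ := h7.exists_mem_notMem l ∅ {ab, f.br, g.br, f.ap, g.ap}
    (by simp [hlab, hlbr, hlap])
    (by rw [card_empty, zero_add]; exact card_le_five.trans_lt (by norm_num))
  obtain ⟨Y, hYl, hYX, hY⟩ := h7.exists_mem_notMem l {X} {ab, f.ar, g.ar, f.bq, g.bq}
    (by simp [hlab, hlar, hlbq])
    (by rw [card_singleton]; exact Nat.add_lt_of_lt_sub' (card_le_five.trans_lt (by norm_num)))
  simp only [mem_insert, mem_singleton, forall_eq_or_imp, forall_eq] at hX hY hYX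
  obtain ⟨hXab, hXfbr, hXgbr, hXfap, hXgap⟩ := hX
  obtain ⟨hYab, hYfar, hYgar, hYfbq, hYgbq⟩ := hY
  obtain ⟨k, rfl, rfl, rfl⟩ := exists_of_mem_l f.A_ne_B f.A_mem_ab f.B_mem_ab f.C_mem_ab
    f.C_ne_A f.C_ne_B hCl hlab hXl hYl hXab hYab (Ne.symm hYX)
  exact ⟨k, .of_notMem (Ne.symm hlf) hYfar hXfbr hXfap hYfbq,
    .of_notMem (Ne.symm hlg) hYgar hXgbr hXgap hYgbq⟩

end HarmonicQuad

end Harmonic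

theorem harmonic_invariance
    [Configuration.ProjectivePlane P L]
    (hdes : DesarguesProperty P L)
    (h8 : LinesHaveAtLeast P L 8)
    (A B : P) (hAB : A ≠ B) (ab : L) (hA : A ∈ ab) (hB : B ∈ ab)
    (C : P) (hC : C ∈ ab)
    -- first auxiliary selection
    (l : L) (hCl : C ∈ l) (hlab : l ≠ ab)
    (R : P) (hRab : R ∉ ab) (hRl : R ∉ l)
    (Pp : P) (hP1 : Pp ∈ l) (hP2 : Col P L B R Pp)
    (Q : P) (hQ1 : Q ∈ l) (hQ2 : Col P L A R Q)
    (S : P) (hS1 : Col P L A Pp S) (hS2 : Col P L B Q S)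
    (D : P) (hD1 : D ∈ ab) (hD2 : Col P L R S D)
    -- second auxiliary selection
    (l' : L) (hCl' : C ∈ l') (hlab' : l' ≠ ab)
    (R' : P) (hRab' : R' ∉ ab) (hRl' : R' ∉ l')
    (Pp' : P) (hP1' : Pp' ∈ l') (hP2' : Col P L B R' Pp')
    (Q' : P) (hQ1' : Q' ∈ l') (hQ2' : Col P L A R' Q')
    (S' : P) (hS1' : Col P L A Pp' S') (hS2' : Col P L B Q' S')
    (D' : P) (hD1' : D' ∈ ab) (hD2' : Col P L R' S' D') :
    D = D' := by
  by_cases hCA : C = A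
  · subst hCA
    exact (eq_of_col_of_mem_l hAB hA hB hCl hlab hRab hRl hP1 hP2 hQ1 hQ2 hS1 hS2 hD1 hD2).trans
      (eq_of_col_of_mem_l hAB hA hB hCl' hlab' hRab' hRl' hP1' hP2' hQ1' hQ2' hS1' hS2' hD1'
        hD2').symm
  by_cases hCB : C = B
  · subst hCB
    exact (eq_of_col_of_mem_l hAB.symm hB hA hCl hlab hRab hRl hQ1 hQ2 hP1 hP2 hS2 hS1 hD1
        hD2).trans
      (eq_of_col_of_mem_l hAB.symm hB hA hCl' hlab' hRab' hRl' hQ1' hQ2' hP1' hP2' hS2' hS1' hD1'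
        hD2').symm
  obtain ⟨f, rfl, rfl⟩ := HarmonicQuad.exists_of_col hAB hA hB hC hCA hCB hCl hlab hRab hRl hP1
    hP2 hQ1 hQ2 hS1 hS2
  obtain ⟨g, rfl, rfl⟩ := HarmonicQuad.exists_of_col hAB hA hB hC hCA hCB hCl' hlab' hRab' hRl'
    hP1' hP2' hQ1' hQ2' hS1' hS2'
  obtain ⟨k, hfk, hgk⟩ := HarmonicQuad.exists_generic (h8.mono (by norm_num)) f g
  calc D = f.D := f.eq_D hD1 hD2
    _ = k.D := hfk.D_eq hdes
    _ = g.D := (hgk.D_eq hdes).symm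
    _ = D' := (g.eq_D hD1' hD2').symm
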